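/- Let F be a biconnected graph (or relational structure with biconnected Gaifman graph) on f vertices, and let S be a relational structure with one relation R of arity f whose girth exceeds f. Let G be the graph on the vertex set of S obtained by imposing a copy of F (via i ↦ x_i) on every tuple (x₁,…,x_f) ∈ R(S). Then every subgraph of G isomorphic to F is contained in the copy of F imposed by a single tuple of R(S). -/

import Mathlib

/-- The structure with a single `f`-ary relation `R` has a cycle of length `t`. -/
def HasCycleOfLength {α : Type} {f : ℕ} (R : Set (Fin f → α)) (t : ℕ) : Prop :=
  (t = 1 ∧ ∃ r ∈ R, ¬ Function.Injective r) ∨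
  (2 ≤ t ∧ ∃ s : ℕ, s + 2 = t ∧
    ∃ (x : Fin (s + 2) → α) (rr : Fin (s + 2) → (Fin f → α)),
      Function.Injective x ∧ Function.Injective rr ∧ (∀ m, rr m ∈ R) ∧
      ∀ m : Fin (s + 2), (∃ j, rr m j = x m) ∧ (∃ j, rr (m + 1) j = x m))

/-- `F` is biconnected: connected, at least 3 vertices, no cutvertex. -/
def Biconnected {V : Type} [Fintype V] (F : SimpleGraph V) : Prop :=
  F.Connected ∧ 3 ≤ Fintype.card V ∧ ∀ v : V, (F.induce {u | u ≠ v}).Connected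

/-!
Two tuples of `R` covering edges `i j` and `i k` of the copy of `F` at a common vertex `i` must
coincide: otherwise a path from `j` to `k` in `F - i`, lifted to the point–tuple incidence graph
and closed up through `g i`, yields a cycle of the incidence graph through at most `f` points,
that is, a cycle of `R` of length at most `f`. As `F` is connected, a single tuple then covers
every edge of the copy, and hence contains every `g v`.
-/

open SimpleGraph Function

section IncidenceGraph

variable {α : Type} {f : ℕ} {R : Set (Fin f → α)}

/-- The bipartite point–tuple incidence graph (Levi graph) of the structure: a cycle of length
`t ≥ 2` in the sense of `HasCycleOfLength` is exactly a cycle of length `2 t` here. -/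
def incidenceGraph (R : Set (Fin f → α)) : SimpleGraph (α ⊕ (Fin f → α)) where
  Adj a b := match a, b with
    | .inl x, .inr r | .inr r, .inl x => r ∈ R ∧ x ∈ Set.range r
    | _, _ => False
  symm := ⟨by rintro (x | r) (y | s) h <;> exact h⟩
  loopless := ⟨by rintro (x | r) h <;> exact h⟩

@[simp]
theorem incidenceGraph_adj_inl_inr {x : α} {r : Fin f → α} :
    (incidenceGraph R).Adj (.inl x) (.inr r) ↔ r ∈ R ∧ x ∈ Set.range r :=
  Iff.rfl

@[simp]
theorem incidenceGraph_adj_inr_inl {x : α} {r : Fin f → α} :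
    (incidenceGraph R).Adj (.inr r) (.inl x) ↔ r ∈ R ∧ x ∈ Set.range r :=
  Iff.rfl

def incidenceGraph.sideColoring (R : Set (Fin f → α)) : (incidenceGraph R).Coloring Bool :=
  Coloring.mk Sum.isRight <| by rintro (x | r) (y | s) h <;> first | exact h.elim | simp

theorem even_iff_isRight_getVert {r : Fin f → α} {v : α ⊕ (Fin f → α)}
    (p : (incidenceGraph R).Walk (.inr r) v) {n : ℕ} (hn : n ≤ p.length) :
    Even n ↔ (p.getVert n).isRight := by
  have h := (incidenceGraph.sideColoring R).even_length_iff_congr (p.take n)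
  rw [Walk.take_length, min_eq_left hn] at h
  have hcol (v : α ⊕ (Fin f → α)) : incidenceGraph.sideColoring R v = v.isRight := rfl
  rw [hcol, hcol, Sum.isRight_inr] at h
  simpa using h

theorem exists_hasCycleOfLength_le_of_isCycle {V : Type} [Fintype V] {g : V → α}
    {r : Fin f → α} {c : (incidenceGraph R).Walk (.inr r) (.inr r)} (hc : c.IsCycle)
    (hpts : ∀ x, .inl x ∈ c.support → x ∈ Set.range g) :
    ∃ t ≤ Fintype.card V, HasCycleOfLength R t := by
  obtain ⟨s, hs⟩ : ∃ s, c.length = 2 * (s + 2) := by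
    obtain ⟨k, hk⟩ := (even_iff_isRight_getVert c le_rfl).2 (by simp)
    have := hc.three_le_length
    exact ⟨k - 2, by omega⟩
  have htup (n : ℕ) : ∃ r', c.getVert (2 * n) = .inr r' := by
    by_cases hn : 2 * n ≤ c.length
    · exact Sum.isRight_iff.1 ((even_iff_isRight_getVert c hn).1 (even_two_mul n))
    · exact ⟨r, c.getVert_of_length_le (by omega)⟩
  have hpt (m : Fin (s + 2)) : ∃ x, c.getVert (2 * m + 1) = .inl x := by
    refine Sum.isLeft_iff.1 (Sum.not_isRight.1 fun h => ?_)
    exact Nat.not_even_two_mul_add_one _ ((even_iff_isRight_getVert c (by omega)).2 h)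
  -- tuples sit at the even positions of `c`, points at the odd ones
  choose tup htup using htup
  choose x hx using hpt
  have hwrap : tup (s + 2) = tup 0 := by
    have h0 := htup 0
    have hlast := htup (s + 2)
    rw [← hs, Walk.getVert_length] at hlast
    rw [Nat.mul_zero, Walk.getVert_zero] at h0
    exact Sum.inr_injective (hlast.symm.trans h0)
  have hsucc (m : Fin (s + 2)) : tup ((m + 1 : Fin (s + 2)) : ℕ) = tup (m + 1) := by
    rw [Fin.val_add_one]
    split_ifs with h
    · rw [h, Fin.val_last, hwrap]
    · rfl
  have hleft (m : Fin (s + 2)) : tup m ∈ R ∧ x m ∈ Set.range (tup m) := by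
    have h := c.adj_getVert_succ (i := 2 * m) (by omega)
    rwa [htup, hx, incidenceGraph_adj_inr_inl] at h
  have hright (m : Fin (s + 2)) : x m ∈ Set.range (tup ((m + 1 : Fin (s + 2)) : ℕ)) := by
    have h := c.adj_getVert_succ (i := 2 * m + 1) (by omega)
    rw [hx, show 2 * (m : ℕ) + 1 + 1 = 2 * (m + 1) by ring, htup,
      incidenceGraph_adj_inl_inr, ← hsucc] at h
    exact h.2
  have hxinj : Injective x := fun a b hab => by
    have h := hc.getVert_injOn (by simp; omega) (by simp; omega) ((hx a).trans (hab ▸ hx b).symm)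
    exact Fin.ext (by omega)
  have htupinj : Injective fun m : Fin (s + 2) => tup m := fun a b hab => by
    have h := hc.getVert_injOn' (by simp; omega) (by simp; omega)
      ((htup a).trans ((congrArg Sum.inr hab).trans (htup b).symm))
    exact Fin.ext (by omega)
  choose v hv using fun m => hpts (x m) (hx m ▸ c.getVert_mem_support _)
  have hvinj : Injective v := fun a b hab => hxinj (by rw [← hv, ← hv, hab])
  refine ⟨s + 2, by simpa using Fintype.card_le_of_injective v hvinj, Or.inr
    ⟨by omega, s, rfl, x, fun m => tup m, hxinj, htupinj, fun m => (hleft m).1,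
      fun m => ⟨(hleft m).2, hright m⟩⟩⟩

theorem exists_walk_incidenceGraph_of_walk {β : Type} {H : SimpleGraph β} {g : β → α}
    (hcov : ∀ a b, H.Adj a b → ∃ r, (incidenceGraph R).Adj (.inl (g a)) (.inr r) ∧
      (incidenceGraph R).Adj (.inl (g b)) (.inr r))
    {a b : β} (p : H.Walk a b) {r r' : Fin f → α}
    (hr : (incidenceGraph R).Adj (.inl (g a)) (.inr r))
    (hr' : (incidenceGraph R).Adj (.inl (g b)) (.inr r')) :
    ∃ w : (incidenceGraph R).Walk (.inr r) (.inr r'),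
      ∀ x, .inl x ∈ w.support → ∃ v ∈ p.support, g v = x := by
  induction p generalizing r with
  | nil => exact ⟨.cons hr.symm (.cons hr' .nil), by simp [eq_comm]⟩
  | cons hab q ih =>
    obtain ⟨r'', ha, hb⟩ := hcov _ _ hab
    obtain ⟨w, hw⟩ := ih hb hr'
    refine ⟨.cons hr.symm (.cons ha w), fun x hx => ?_⟩
    simp only [Walk.support_cons, List.mem_cons, Sum.inl.injEq, reduceCtorEq, false_or] at hx
    rcases hx with rfl | hx
    · exact ⟨_, q.support.mem_cons_self .., rfl⟩
    · obtain ⟨v, hv, rfl⟩ := hw x hx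
      exact ⟨v, List.mem_cons_of_mem _ hv, rfl⟩

end IncidenceGraph

section ImposedCopies

variable {α : Type} {f : ℕ} {R : Set (Fin f → α)}
  {V : Type} {F : SimpleGraph V} {g : V → α}

theorem covering_tuple_eq_of_adj_of_adj [Fintype V] (hg : Injective g)
    (hgirth : ∀ t ≤ Fintype.card V, ¬ HasCycleOfLength R t)
    (hcov : ∀ a b, F.Adj a b → ∃ r, (incidenceGraph R).Adj (.inl (g a)) (.inr r) ∧
      (incidenceGraph R).Adj (.inl (g b)) (.inr r))
    {i j k : V} (hi : (F.induce {u | u ≠ i}).Preconnected) (hij : F.Adj i j) (hik : F.Adj i k)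
    {r r' : Fin f → α}
    (hri : (incidenceGraph R).Adj (.inl (g i)) (.inr r))
    (hrj : (incidenceGraph R).Adj (.inl (g j)) (.inr r))
    (hr'i : (incidenceGraph R).Adj (.inl (g i)) (.inr r'))
    (hr'k : (incidenceGraph R).Adj (.inl (g k)) (.inr r')) :
    r = r' := by
  classical
  by_contra hne
  obtain ⟨p⟩ := hi ⟨j, hij.ne'⟩ ⟨k, hik.ne'⟩
  obtain ⟨w, hw⟩ := exists_walk_incidenceGraph_of_walk (g := g ∘ Subtype.val)
    (fun a b hab => hcov a b hab) p hrj hr'k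
  have hgi : .inl (g i) ∉ w.toPath.val.support := fun h => by
    obtain ⟨v, -, hv⟩ := hw _ (w.support_toPath_subset_support h)
    exact v.2 (hg hv)
  -- `r ≠ r'` is what makes the closing edge `r' – g i` new
  have hc : (Walk.cons hr'i.symm (.cons hri w.toPath.val)).IsCycle := by
    rw [Walk.cons_isCycle_iff, Walk.edges_cons, List.mem_cons, not_or]
    refine ⟨w.toPath.property.cons hgi, by simp [Ne.symm hne], fun he => hgi ?_⟩
    exact w.toPath.val.snd_mem_support_of_mem_edges he
  obtain ⟨t, ht, hcyc⟩ := exists_hasCycleOfLength_le_of_isCycle (g := g) hc fun x hx => by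
    simp only [Walk.support_cons, List.mem_cons, Sum.inl.injEq, reduceCtorEq, false_or] at hx
    rcases hx with rfl | hx
    · exact ⟨i, rfl⟩
    · obtain ⟨v, -, rfl⟩ := hw x (w.support_toPath_subset_support hx)
      exact ⟨v, rfl⟩
  exact hgirth t ht hcyc

theorem covering_tuple_eq_of_walk [Fintype V] (hg : Injective g)
    (hgirth : ∀ t ≤ Fintype.card V, ¬ HasCycleOfLength R t)
    (hcov : ∀ a b, F.Adj a b → ∃ r, (incidenceGraph R).Adj (.inl (g a)) (.inr r) ∧
      (incidenceGraph R).Adj (.inl (g b)) (.inr r))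
    (hF : ∀ v, (F.induce {u | u ≠ v}).Preconnected)
    {a b a' b' : V} (p : F.Walk a b) (ha : F.Adj a a') (hb : F.Adj b b') {r r' : Fin f → α}
    (hra : (incidenceGraph R).Adj (.inl (g a)) (.inr r))
    (hra' : (incidenceGraph R).Adj (.inl (g a')) (.inr r))
    (hr'b : (incidenceGraph R).Adj (.inl (g b)) (.inr r'))
    (hr'b' : (incidenceGraph R).Adj (.inl (g b')) (.inr r')) :
    r = r' := by
  induction p generalizing a' r with
  | nil => exact covering_tuple_eq_of_adj_of_adj hg hgirth hcov (hF _) ha hb hra hra' hr'b hr'b'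
  | cons hac q ih =>
    obtain ⟨r'', hr''a, hr''c⟩ := hcov _ _ hac
    exact (covering_tuple_eq_of_adj_of_adj hg hgirth hcov (hF _) ha hac hra hra' hr''a hr''c).trans
      (ih hac.symm hb hr''c hr''a hr'b)

end ImposedCopies

theorem stmt9 {f : ℕ} (F : SimpleGraph (Fin f)) (hF : Biconnected F)
    {α : Type} (R : Set (Fin f → α))
    (hgirth : ∀ t : ℕ, t ≤ f → ¬ HasCycleOfLength R t)
    (G : SimpleGraph α)
    (hG : ∀ u v : α, G.Adj u v ↔
      (u ≠ v ∧ ∃ r ∈ R, ∃ i j : Fin f, F.Adj i j ∧ r i = u ∧ r j = v))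
    (g : Fin f → α) (hg : Function.Injective g)
    (hcopy : ∀ i j : Fin f, F.Adj i j → G.Adj (g i) (g j)) :
    ∃ r ∈ R, Set.range g ⊆ Set.range r := by
  obtain ⟨hconn, hcard, hcut⟩ := hF
  have hgirth' : ∀ t ≤ Fintype.card (Fin f), ¬ HasCycleOfLength R t := by simpa using hgirth
  have hcov (a b : Fin f) (hab : F.Adj a b) :
      ∃ r, (incidenceGraph R).Adj (.inl (g a)) (.inr r) ∧
        (incidenceGraph R).Adj (.inl (g b)) (.inr r) := by
    obtain ⟨-, r, hr, i, j, -, hi, hj⟩ := (hG _ _).1 (hcopy a b hab)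
    exact ⟨r, ⟨hr, i, hi⟩, ⟨hr, j, hj⟩⟩
  have : Nontrivial (Fin f) := Fin.nontrivial_iff_two_le.2 (by simp at hcard; omega)
  obtain ⟨i₀⟩ : Nonempty (Fin f) := inferInstance
  obtain ⟨j₀, h₀⟩ := hconn.preconnected.exists_adj_of_nontrivial i₀
  obtain ⟨r₀, hr₀i, hr₀j⟩ := hcov _ _ h₀
  refine ⟨r₀, hr₀i.1, ?_⟩
  rintro _ ⟨v, rfl⟩
  obtain ⟨w, hvw⟩ := hconn.preconnected.exists_adj_of_nontrivial v
  obtain ⟨r, hrv, hrw⟩ := hcov _ _ hvw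
  obtain ⟨p⟩ := hconn.preconnected v i₀
  have hr : r = r₀ := covering_tuple_eq_of_walk hg hgirth' hcov
    (fun v => (hcut v).preconnected) p hvw h₀ hrv hrw hr₀i hr₀j
  exact hr ▸ hrv.2
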